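/- Let (G_i)_{i∈I} be a family of groups, X a compact space, and ι : I → X a map. Then ∏_{i∈I} G_i is perfect if and only if for every p ∈ X the stalk at p of the direct image presheaf is perfect. -/

import Mathlib

/-!
An element of `∏ i, G i` lies in the commutator subgroup iff its coordinates are products of a
*uniformly bounded* number of commutators. A stalk condition at `p` provides such a bound on
`ι⁻¹(U)` for a neighbourhood `U` of `p`, and compactness of `X` turns these local bounds into a
global one.
-/

open scoped commutatorElement

/-- `g` is a product of `n` commutators. -/
def IsProdOfCommutators {G : Type*} [Group G] (g : G) (n : ℕ) : Prop :=
  ∃ a b : Fin n → G, g = (List.ofFn fun k => ⁅a k, b k⁆).prod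

namespace IsProdOfCommutators

variable {G H : Type*} [Group G] [Group H]

lemma one (n : ℕ) : IsProdOfCommutators (1 : G) n :=
  ⟨1, 1, by simp⟩

lemma commutatorElement (a b : G) : IsProdOfCommutators ⁅a, b⁆ 1 :=
  ⟨fun _ => a, fun _ => b, by simp⟩

lemma mul {g h : G} {m n : ℕ} (hg : IsProdOfCommutators g m) (hh : IsProdOfCommutators h n) :
    IsProdOfCommutators (g * h) (m + n) := by
  obtain ⟨a, b, rfl⟩ := hg
  obtain ⟨c, d, rfl⟩ := hh
  refine ⟨Fin.append a c, Fin.append b d, ?_⟩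
  rw [← List.prod_append, ← List.ofFn_fin_append]
  congr 2
  ext k
  refine Fin.addCases (fun k => ?_) (fun k => ?_) k <;> simp

lemma mono {g : G} {m n : ℕ} (hg : IsProdOfCommutators g m) (hmn : m ≤ n) :
    IsProdOfCommutators g n := by
  obtain ⟨k, rfl⟩ := Nat.exists_eq_add_of_le hmn
  simpa using hg.mul (one k)

lemma map {g : G} {n : ℕ} (hg : IsProdOfCommutators g n) (f : G →* H) :
    IsProdOfCommutators (f g) n := by
  obtain ⟨a, b, rfl⟩ := hg
  exact ⟨f ∘ a, f ∘ b, by simp [map_list_prod, List.map_ofFn, Function.comp_def]⟩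

end IsProdOfCommutators

lemma mem_commutator_iff_exists_isProdOfCommutators {G : Type*} [Group G] {g : G} :
    g ∈ commutator G ↔ ∃ n, IsProdOfCommutators g n := by
  constructor
  · rw [commutator_eq_closure]
    intro hg
    induction hg using Subgroup.closure_induction'' with
    | mem x hx =>
      obtain ⟨a, b, rfl⟩ := hx
      exact ⟨1, .commutatorElement a b⟩
    | inv_mem x hx =>
      obtain ⟨a, b, rfl⟩ := hx
      exact ⟨1, commutatorElement_inv a b ▸ .commutatorElement b a⟩
    | one => exact ⟨0, .one 0⟩
    | mul x y _ _ hx hy =>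
      obtain ⟨m, hx⟩ := hx
      obtain ⟨n, hy⟩ := hy
      exact ⟨m + n, hx.mul hy⟩
  · rintro ⟨n, a, b, rfl⟩
    refine list_prod_mem fun x hx => ?_
    obtain ⟨k, rfl⟩ := List.mem_ofFn.mp hx
    exact Subgroup.commutator_mem_commutator (Subgroup.mem_top _) (Subgroup.mem_top _)

lemma isProdOfCommutators_pi_iff {I : Type*} {G : I → Type*} [∀ i, Group (G i)]
    {g : ∀ i, G i} {n : ℕ} : IsProdOfCommutators g n ↔ ∀ i, IsProdOfCommutators (g i) n := by
  refine ⟨fun hg i => hg.map (Pi.evalMonoidHom G i), fun hg => ?_⟩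
  choose a b hab using hg
  refine ⟨fun k i => a i k, fun k i => b i k, funext fun i => ?_⟩
  rw [hab i, Pi.list_prod_apply, List.map_ofFn]
  rfl

/-- Let `(G i)_{i ∈ I}` be a family of groups, `X` a compact space, and `ι : I → X` a map.
Then `∏ i, G i` is perfect if and only if for every `p ∈ X` the stalk at `p` of the direct
image presheaf is perfect, i.e. every `g` agrees, on `ι⁻¹(U)` for some open neighborhood `U`
of `p`, with a product of commutators. -/
theorem pi_perfect_iff_stalks_perfect
    {I : Type*} (G : I → Type*) [∀ i, Group (G i)]
    {X : Type*} [TopologicalSpace X] [CompactSpace X] (ι : I → X) :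
    commutator (∀ i, G i) = ⊤ ↔
      ∀ p : X, ∀ g : ∀ i, G i, ∃ (n : ℕ) (c : ∀ i, G i) (U : Set X),
        IsProdOfCommutators c n ∧ IsOpen U ∧ p ∈ U ∧ ∀ i : I, ι i ∈ U → g i = c i := by
  constructor
  · intro h p g
    obtain ⟨n, hg⟩ := mem_commutator_iff_exists_isProdOfCommutators.1 (h ▸ Subgroup.mem_top g)
    exact ⟨n, g, Set.univ, hg, isOpen_univ, trivial, fun _ _ => rfl⟩
  · intro h
    refine eq_top_iff.2 fun g _ => ?_
    choose n c U hc hU hpU hgc using fun p => h p g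
    obtain ⟨t, ht⟩ := isCompact_univ.elim_finite_subcover U hU
      fun p _ => Set.mem_iUnion.2 ⟨p, hpU p⟩
    refine mem_commutator_iff_exists_isProdOfCommutators.2
      ⟨t.sup n, isProdOfCommutators_pi_iff.2 fun i => ?_⟩
    obtain ⟨p, hpt, hip⟩ := Set.mem_iUnion₂.1 (ht (Set.mem_univ (ι i)))
    rw [hgc p i hip]
    exact (isProdOfCommutators_pi_iff.1 (hc p) i).mono (Finset.le_sup hpt)
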